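/- For every Hermitian-preserving trace-scaling linear map D on d×d complex matrices there exist two quantum channels D_1, D_2 on d×d matrices and two real numbers c_1, c_2 such that D = c_1·D_1 + c_2·D_2. -/

import Mathlib

open Matrix
open scoped Kronecker ComplexOrder

abbrev MatC (n : Type*) := Matrix n n ℂ

/-- A linear map on matrices is Hermitian-preserving if it sends Hermitian
matrices to Hermitian matrices. -/
def IsHermitianPreserving {n : Type*} [Fintype n] [DecidableEq n]
    (M : MatC n →ₗ[ℂ] MatC n) : Prop :=
  ∀ X : MatC n, X.IsHermitian → (M X).IsHermitian

/-- A linear map on matrices is trace-scaling if it scales the trace by a fixed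
real factor. -/
def IsTraceScaling {n : Type*} [Fintype n] [DecidableEq n]
    (M : MatC n →ₗ[ℂ] MatC n) : Prop :=
  ∃ p : ℝ, ∀ X : MatC n, (M X).trace = (p : ℂ) * X.trace

/-- The Choi matrix `J_M = Σ_{i,j} |i⟩⟨j| ⊗ M(|i⟩⟨j|)` of a linear map on matrices. -/
def choi {n : Type*} [Fintype n] [DecidableEq n]
    (M : MatC n →ₗ[ℂ] MatC n) : Matrix (n × n) (n × n) ℂ :=
  Matrix.of fun p q => M (Matrix.single p.1 q.1 1) p.2 q.2

/-- A quantum channel is a completely positive (positive semidefinite Choi matrix)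
trace-preserving linear map. -/
def IsQuantumChannel {n : Type*} [Fintype n] [DecidableEq n]
    (M : MatC n →ₗ[ℂ] MatC n) : Prop :=
  (choi M).PosSemidef ∧ ∀ X : MatC n, (M X).trace = X.trace

/-- `Md` is the adjoint of `M` with respect to the Hilbert-Schmidt inner product
`⟨A, B⟩ = tr[A† B]`. -/
def IsAdjointPair {n : Type*} [Fintype n] [DecidableEq n]
    (M Md : MatC n →ₗ[ℂ] MatC n) : Prop :=
  ∀ A B : MatC n, (Aᴴ * M B).trace = ((Md A)ᴴ * B).trace

/-- A density matrix: positive semidefinite with unit trace. -/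
def IsDensityMatrix {n : Type*} [Fintype n] [DecidableEq n] (ρ : MatC n) : Prop :=
  ρ.PosSemidef ∧ ρ.trace = 1

/-- The Hermitian matrices as a real submodule of the complex matrices. -/
noncomputable def hermSubmodule (n : Type*) [Fintype n] [DecidableEq n] :
    Submodule ℝ (MatC n) :=
  selfAdjoint.submodule ℝ (MatC n)

/-- The image of the Hermitian matrices under a (complex-)linear map, as a real
submodule. -/
noncomputable def hermitianImage {n : Type*} [Fintype n] [DecidableEq n]
    (M : MatC n →ₗ[ℂ] MatC n) : Submodule ℝ (MatC n) :=
  (hermSubmodule n).map (M.restrictScalars ℝ)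

/-!
Write `N` for the dimension. The depolarizing channel `Λ X = (tr X / N) • 1` has Choi matrix
`N⁻¹ • 1`, so `D + (N t) • Λ` has Choi matrix `J_D + t • 1`; since `J_D` is Hermitian, this is
positive semidefinite once `t` bounds the operator norm of `J_D`. The trace factor `s = p + N t`
is positive for `t` large, hence `D₁ = s⁻¹ • (D + (N t) • Λ)` is a channel and
`D = s • D₁ - (N t) • Λ`.
-/

section
variable {n : Type*} [Fintype n] [DecidableEq n]

open ComplexStarModule in
theorem IsHermitianPreserving.map_conjTranspose {M : MatC n →ₗ[ℂ] MatC n}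
    (hM : IsHermitianPreserving M) (X : MatC n) : M Xᴴ = (M X)ᴴ := by
  have hre : (ℜ X : MatC n)ᴴ = ℜ X := (ℜ X).2
  have him : (ℑ X : MatC n)ᴴ = ℑ X := (ℑ X).2
  have hMre : (M (ℜ X : MatC n))ᴴ = M (ℜ X) := hM _ (ℜ X).2
  have hMim : (M (ℑ X : MatC n))ᴴ = M (ℑ X) := hM _ (ℑ X).2
  conv_lhs => rw [← realPart_add_I_smul_imaginaryPart X]
  conv_rhs => rw [← realPart_add_I_smul_imaginaryPart X]
  simp [hre, him, hMre, hMim]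

theorem IsHermitianPreserving.isHermitian_choi {M : MatC n →ₗ[ℂ] MatC n}
    (hM : IsHermitianPreserving M) : (choi M).IsHermitian := by
  ext p q
  rw [conjTranspose_apply, choi, of_apply, of_apply, ← conjTranspose_apply,
    ← hM.map_conjTranspose, conjTranspose_single, star_one]

theorem choi_add (M N : MatC n →ₗ[ℂ] MatC n) : choi (M + N) = choi M + choi N := by
  ext; simp [choi]

theorem choi_smul (c : ℂ) (M : MatC n →ₗ[ℂ] MatC n) : choi (c • M) = c • choi M := by
  ext; simp [choi]

open scoped Matrix.Norms.L2Operator MatrixOrder in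
theorem Matrix.IsHermitian.posSemidef_add_smul_one {H : MatC n} (hH : H.IsHermitian) {t : ℝ}
    (ht : ‖H‖ ≤ t) : (H + t • (1 : MatC n)).PosSemidef := by
  have hnorm : (H + ‖H‖ • (1 : MatC n)).PosSemidef := by
    rw [← nonneg_iff_posSemidef, ← neg_le_iff_add_nonneg, ← Algebra.algebraMap_eq_smul_one]
    exact hH.isSelfAdjoint.neg_algebraMap_norm_le_self
  have hgap : ((t - ‖H‖) • (1 : MatC n)).PosSemidef := PosSemidef.one.smul (sub_nonneg.2 ht)
  convert hnorm.add hgap using 1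
  module

variable (n) in
noncomputable def depolarizing : MatC n →ₗ[ℂ] MatC n :=
  (Fintype.card n : ℂ)⁻¹ • (traceLinearMap n ℂ ℂ).smulRight 1

theorem depolarizing_apply (X : MatC n) :
    depolarizing n X = ((Fintype.card n : ℂ)⁻¹ * X.trace) • 1 := by
  simp [depolarizing, smul_smul]

theorem choi_depolarizing : choi (depolarizing n) = (Fintype.card n : ℂ)⁻¹ • 1 := by
  ext ⟨i, k⟩ ⟨j, l⟩
  by_cases hij : i = j
  · subst hij
    simp [choi, depolarizing_apply, one_apply]
  · simp [choi, depolarizing_apply, trace_single_eq_of_ne _ _ _ hij, one_apply, hij]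

theorem isQuantumChannel_depolarizing [Nonempty n] : IsQuantumChannel (depolarizing n) := by
  refine ⟨?_, fun X => ?_⟩
  · rw [choi_depolarizing]
    exact PosSemidef.one.smul (by positivity)
  · have hcard : (Fintype.card n : ℂ) ≠ 0 := Nat.cast_ne_zero.2 Fintype.card_ne_zero
    simp only [depolarizing_apply, trace_smul, trace_one, smul_eq_mul]
    field_simp

theorem choi_add_smul_depolarizing [Nonempty n] (M : MatC n →ₗ[ℂ] MatC n) (t : ℝ) :
    choi (M + ((Fintype.card n * t : ℝ) : ℂ) • depolarizing n) = choi M + t • 1 := by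
  have hcard : (Fintype.card n : ℂ) ≠ 0 := Nat.cast_ne_zero.2 Fintype.card_ne_zero
  rw [choi_add, choi_smul, choi_depolarizing, smul_smul, ← Complex.coe_smul]
  congr 2
  push_cast
  field_simp

theorem isQuantumChannel_inv_smul {M : MatC n →ₗ[ℂ] MatC n} {s : ℝ} (hs : 0 < s)
    (hM : (choi M).PosSemidef) (htr : ∀ X, (M X).trace = s * X.trace) :
    IsQuantumChannel ((s : ℂ)⁻¹ • M) := by
  have hs' : (s : ℂ) ≠ 0 := Complex.ofReal_ne_zero.2 hs.ne'
  refine ⟨?_, fun X => ?_⟩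
  · rw [choi_smul, ← Complex.ofReal_inv]
    exact hM.smul (Complex.zero_le_real.2 (inv_nonneg.2 hs.le))
  · simp [htr, hs']

theorem isQuantumChannel_of_isEmpty [IsEmpty n] (M : MatC n →ₗ[ℂ] MatC n) :
    IsQuantumChannel M :=
  ⟨by simpa [Subsingleton.elim (choi M) 0] using PosSemidef.zero, fun X => by simp [trace]⟩

open scoped Matrix.Norms.L2Operator in
theorem IsHermitianPreserving.exists_eq_smul_add_smul [Nonempty n] {D : MatC n →ₗ[ℂ] MatC n}
    (hHP : IsHermitianPreserving D) (hTS : IsTraceScaling D) :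
    ∃ (c₁ c₂ : ℝ) (D₁ D₂ : MatC n →ₗ[ℂ] MatC n),
      IsQuantumChannel D₁ ∧ IsQuantumChannel D₂ ∧ D = (c₁ : ℂ) • D₁ + (c₂ : ℂ) • D₂ := by
  obtain ⟨p, hp⟩ := hTS
  set N : ℝ := (Fintype.card n : ℝ)
  have hN : 1 ≤ N := Nat.one_le_cast.2 Fintype.card_pos
  obtain ⟨t, hnorm, ht⟩ : ∃ t : ℝ, ‖choi D‖ ≤ t ∧ |p| + 1 ≤ t :=
    ⟨max ‖choi D‖ (|p| + 1), le_max_left _ _, le_max_right _ _⟩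
  set s : ℝ := p + N * t
  have hs : 0 < s := by
    have : t ≤ N * t := le_mul_of_one_le_left (by linarith [abs_nonneg p]) hN
    linarith [neg_abs_le p]
  set M := D + ((N * t : ℝ) : ℂ) • depolarizing n
  have hchoi : (choi M).PosSemidef := by
    rw [choi_add_smul_depolarizing]
    exact hHP.isHermitian_choi.posSemidef_add_smul_one hnorm
  have htr (X : MatC n) : (M X).trace = s * X.trace := by
    simp only [M, s, LinearMap.add_apply, LinearMap.smul_apply, trace_add, trace_smul, hp,
      isQuantumChannel_depolarizing.2]
    push_cast
    ring
  refine ⟨s, -(N * t), (s : ℂ)⁻¹ • M, depolarizing n, isQuantumChannel_inv_smul hs hchoi htr,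
    isQuantumChannel_depolarizing, ?_⟩
  rw [smul_smul, mul_inv_cancel₀ (Complex.ofReal_ne_zero.2 hs.ne'), one_smul]
  simp only [M]
  module

end

/-- Any Hermitian-preserving trace-scaling map is a real linear combination of
two quantum channels. -/
theorem stmt3 (d : ℕ) (D : MatC (Fin d) →ₗ[ℂ] MatC (Fin d))
    (hHP : IsHermitianPreserving D) (hTS : IsTraceScaling D) :
    ∃ (c₁ c₂ : ℝ) (D₁ D₂ : MatC (Fin d) →ₗ[ℂ] MatC (Fin d)),
      IsQuantumChannel D₁ ∧ IsQuantumChannel D₂ ∧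
      D = (c₁ : ℂ) • D₁ + (c₂ : ℂ) • D₂ := by
  rcases isEmpty_or_nonempty (Fin d) with hd | hd
  · exact ⟨1, 0, D, D, isQuantumChannel_of_isEmpty D, isQuantumChannel_of_isEmpty D, by simp⟩
  · exact hHP.exists_eq_smul_add_smul hTS
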